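/- arXiv:1609.09321 — 3 statements merged into one kernel-verified Lean document; each statement's English description precedes it below -/
import Mathlib

section
/- Let m ≥ 3. The graph on Z_m × Z_8 formed by the union of Cay(Z_m × Z_8, {±1} × {4}) and, for each j ∈ Z_m, a complete graph K_8 on the vertex set {j} × Z_8, can be decomposed into four C_8-factors and one perfect matching. -/
open SimpleGraph

/-- `H` is a `C_k`-factor: a 2-regular spanning graph all of whose
connected components have exactly `k` vertices (hence are `k`-cycles). -/
def IsCycleFactor {V : Type*} (H : SimpleGraph V) (k : ℕ) : Prop :=
  (∀ v, (H.neighborSet v).ncard = 2) ∧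
  (∀ v, (H.connectedComponentMk v).supp.ncard = k)

/-- `H` is a perfect matching (1-factor): every vertex has exactly one neighbour. -/
def IsOneFactor {V : Type*} (H : SimpleGraph V) : Prop :=
  ∀ v, (H.neighborSet v).ncard = 1

/-- A partition of the edge set of `G` into cycle factors with prescribed cycle lengths. -/
def CycleDecomp {V : Type*} {k : ℕ} (G : SimpleGraph V) (ℓ : Fin k → ℕ) : Prop :=
  ∃ f : Fin k → SimpleGraph V,
    (∀ i, f i ≤ G ∧ IsCycleFactor (f i) (ℓ i)) ∧
    ∀ e ∈ G.edgeSet, ∃! i, e ∈ (f i).edgeSet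

/-- A partition of the edge set of `G` into cycle factors with prescribed cycle
lengths together with one perfect matching. -/
def CycleDecompPM {V : Type*} {k : ℕ} (G : SimpleGraph V) (ℓ : Fin k → ℕ) : Prop :=
  ∃ (f : Fin k → SimpleGraph V) (M : SimpleGraph V),
    (∀ i, f i ≤ G ∧ IsCycleFactor (f i) (ℓ i)) ∧ M ≤ G ∧ IsOneFactor M ∧
    ∀ e ∈ G.edgeSet,
      ((∃! i, e ∈ (f i).edgeSet) ∧ e ∉ M.edgeSet) ∨
      ((∀ i, e ∉ (f i).edgeSet) ∧ e ∈ M.edgeSet)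

/-- The Cayley graph on `ZMod m × ZMod n` with connection set `S`
(symmetrised, loops removed). -/
def cay (m n : ℕ) (S : Set (ZMod m × ZMod n)) : SimpleGraph (ZMod m × ZMod n) :=
  SimpleGraph.fromRel (fun x y => x - y ∈ S)


namespace Stmt10Aux

def tau (i : Fin 4) (x : ZMod 8) : ZMod 8 :=
  match i.val, x.val with
  | 0, 0 => 2 | 0, 1 => 5 | 0, 2 => 3 | 0, 3 => 1 | 0, 4 => 0 | 0, 5 => 6 | 0, 6 => 7 | 0, 7 => 4
  | 1, 0 => 3 | 1, 1 => 6 | 1, 2 => 4 | 1, 3 => 7 | 1, 4 => 0 | 1, 5 => 1 | 1, 6 => 2 | 1, 7 => 5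
  | 2, 0 => 4 | 2, 1 => 2 | 2, 2 => 7 | 2, 3 => 5 | 2, 4 => 6 | 2, 5 => 1 | 2, 6 => 3 | 2, 7 => 0
  | 3, 0 => 1 | 3, 1 => 7 | 3, 2 => 6 | 3, 3 => 4 | 3, 4 => 5 | 3, 5 => 2 | 3, 6 => 0 | 3, 7 => 3
  | _, _ => 0

def tauInv (i : Fin 4) (x : ZMod 8) : ZMod 8 :=
  match i.val, x.val with
  | 0, 0 => 4 | 0, 1 => 3 | 0, 2 => 0 | 0, 3 => 2 | 0, 4 => 7 | 0, 5 => 1 | 0, 6 => 5 | 0, 7 => 6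
  | 1, 0 => 4 | 1, 1 => 5 | 1, 2 => 6 | 1, 3 => 0 | 1, 4 => 2 | 1, 5 => 7 | 1, 6 => 1 | 1, 7 => 3
  | 2, 0 => 7 | 2, 1 => 5 | 2, 2 => 1 | 2, 3 => 6 | 2, 4 => 0 | 2, 5 => 3 | 2, 6 => 4 | 2, 7 => 2
  | 3, 0 => 6 | 3, 1 => 0 | 3, 2 => 5 | 3, 3 => 7 | 3, 4 => 3 | 3, 5 => 4 | 3, 6 => 2 | 3, 7 => 1
  | _, _ => 0

def inB (i : Fin 4) (x : ZMod 8) : Bool :=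
  match i.val, x.val with
  | 0, 4 | 0, 5 | 0, 6 | 0, 7 => true
  | 1, 1 | 1, 5 | 1, 6 | 1, 7 => true
  | 2, 0 | 2, 1 | 2, 2 | 2, 7 => true
  | 3, 2 | 3, 3 | 3, 4 | 3, 5 => true
  | _, _ => false

def pi8 (x : ZMod 8) : ZMod 8 :=
  match x.val with
  | 0 => 5 | 1 => 4 | 2 => 6 | 3 => 7 | 4 => 1 | 5 => 0 | 6 => 2 | 7 => 3 | _ => 0

def colAdj (i : Fin 4) (x y : ZMod 8) : Prop :=
  (y = tau i x ∧ inB i x = inB i (tau i x)) ∨ (x = tau i y ∧ inB i y = inB i (tau i y))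

def crossOwn (i : Fin 4) (x : ZMod 8) : Prop :=
  (tau i x = x + 4 ∧ inB i x = false ∧ inB i (x + 4) = true) ∨
  (tau i (x + 4) = x ∧ inB i (x + 4) = true ∧ inB i x = false)

instance (i : Fin 4) (x y : ZMod 8) : Decidable (colAdj i x y) := by
  unfold colAdj; infer_instance

instance (i : Fin 4) (x : ZMod 8) : Decidable (crossOwn i x) := by
  unfold crossOwn; infer_instance

lemma tauInv_tau : ∀ i x, tauInv i (tau i x) = x := by decide
lemma tau_tauInv : ∀ i x, tau i (tauInv i x) = x := by decide
lemma tau_ne : ∀ i x, tau i x ≠ x := by decide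
lemma tauInv_ne : ∀ i x, tauInv i x ≠ x := by decide
lemma tauInv_ne_tau : ∀ i x, tauInv i x ≠ tau i x := by decide
lemma pi8_ne : ∀ x, pi8 x ≠ x := by decide
lemma pi8_eq_iff : ∀ a b : ZMod 8, a = pi8 b ↔ b = pi8 a := by decide
lemma sameB_cases : ∀ i x, (inB i x = inB i (tau i x)) ∨
    (inB i x = false ∧ inB i (tau i x) = true ∧ tau i x = x + 4) ∨
    (inB i x = true ∧ inB i (tau i x) = false ∧ x = tau i x + 4) := by decide
lemma colAdj_or_pi : ∀ x y : ZMod 8, x ≠ y → (y = pi8 x) ∨ ∃ i, colAdj i x y := by decide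
lemma colAdj_not_pi : ∀ i x y, colAdj i x y → y ≠ pi8 x := by decide
lemma colAdj_unique : ∀ i i' x y, colAdj i x y → colAdj i' x y → i = i' := by decide
lemma crossOwn_exists : ∀ x, ∃ i, crossOwn i x := by decide
lemma crossOwn_unique : ∀ i i' x, crossOwn i x → crossOwn i' x → i = i' := by decide
lemma tau_orbit : ∀ i (x y : ZMod 8), ∃ k : Fin 8, (tau i)^[k.val] x = y := by decide

section Graphs

variable (m : ℕ)

def chi (i : Fin 4) (x : ZMod 8) : ZMod m := if inB i x then 1 else 0

def sig (i : Fin 4) (v : ZMod m × ZMod 8) : ZMod m × ZMod 8 :=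
  (v.1 + chi m i (tau i v.2) - chi m i v.2, tau i v.2)

def sigInv (i : Fin 4) (v : ZMod m × ZMod 8) : ZMod m × ZMod 8 :=
  (v.1 + chi m i (tauInv i v.2) - chi m i v.2, tauInv i v.2)

def Fc (i : Fin 4) : SimpleGraph (ZMod m × ZMod 8) :=
  fromRel (fun u w => w = sig m i u)

def MG : SimpleGraph (ZMod m × ZMod 8) :=
  fromRel (fun u w => u.1 = w.1 ∧ w.2 = pi8 u.2)

variable {m}

lemma chi_congr {i : Fin 4} {x y : ZMod 8} (h : inB i x = inB i y) :
    chi m i x = chi m i y := by simp [chi, h]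

lemma chi_of_false {i : Fin 4} {x : ZMod 8} (h : inB i x = false) :
    chi m i x = 0 := by simp [chi, h]

lemma chi_of_true {i : Fin 4} {x : ZMod 8} (h : inB i x = true) :
    chi m i x = 1 := by simp [chi, h]

lemma sig_snd (i : Fin 4) (v : ZMod m × ZMod 8) : (sig m i v).2 = tau i v.2 := rfl

lemma sig_ne (i : Fin 4) (v : ZMod m × ZMod 8) : sig m i v ≠ v := by
  intro h; exact tau_ne i v.2 (congrArg Prod.snd h)

lemma sigInv_ne (i : Fin 4) (v : ZMod m × ZMod 8) : sigInv m i v ≠ v := by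
  intro h; exact tauInv_ne i v.2 (congrArg Prod.snd h)

lemma sigInv_ne_sig (i : Fin 4) (v : ZMod m × ZMod 8) : sigInv m i v ≠ sig m i v := by
  intro h; exact tauInv_ne_tau i v.2 (congrArg Prod.snd h)

lemma sig_sigInv (i : Fin 4) (v : ZMod m × ZMod 8) : sig m i (sigInv m i v) = v := by
  have h2 : tau i (tauInv i v.2) = v.2 := tau_tauInv i v.2
  refine Prod.ext ?_ h2
  show v.1 + chi m i (tauInv i v.2) - chi m i v.2
      + chi m i (tau i (tauInv i v.2)) - chi m i (tauInv i v.2) = v.1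
  rw [h2]; ring

lemma sigInv_sig (i : Fin 4) (v : ZMod m × ZMod 8) : sigInv m i (sig m i v) = v := by
  have h2 : tauInv i (tau i v.2) = v.2 := tauInv_tau i v.2
  refine Prod.ext ?_ h2
  show v.1 + chi m i (tau i v.2) - chi m i v.2
      + chi m i (tauInv i (tau i v.2)) - chi m i (tau i v.2) = v.1
  rw [h2]; ring

lemma eq_sig_iff (i : Fin 4) (u w : ZMod m × ZMod 8) :
    u = sig m i w ↔ w = sigInv m i u := by
  constructor
  · rintro rfl; exact (sigInv_sig i w).symm
  · rintro rfl; exact (sig_sigInv i u).symm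

lemma Fc_adj (i : Fin 4) (u w : ZMod m × ZMod 8) :
    (Fc m i).Adj u w ↔ u ≠ w ∧ (w = sig m i u ∨ w = sigInv m i u) := by
  show u ≠ w ∧ (w = sig m i u ∨ u = sig m i w) ↔ _
  constructor
  · rintro ⟨hne, h | h⟩
    · exact ⟨hne, Or.inl h⟩
    · exact ⟨hne, Or.inr ((eq_sig_iff i u w).mp h)⟩
  · rintro ⟨hne, h | h⟩
    · exact ⟨hne, Or.inl h⟩
    · exact ⟨hne, Or.inr ((eq_sig_iff i u w).mpr h)⟩

lemma Fc_neighborSet (i : Fin 4) (v : ZMod m × ZMod 8) :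
    (Fc m i).neighborSet v = {sig m i v, sigInv m i v} := by
  ext w
  simp only [mem_neighborSet, Fc_adj, Set.mem_insert_iff, Set.mem_singleton_iff]
  constructor
  · rintro ⟨-, h⟩; exact h
  · rintro h
    refine ⟨?_, h⟩
    rintro rfl
    rcases h with h | h
    · exact sig_ne i v h.symm
    · exact sigInv_ne i v h.symm

lemma Fc_deg (i : Fin 4) (v : ZMod m × ZMod 8) :
    ((Fc m i).neighborSet v).ncard = 2 := by
  rw [Fc_neighborSet]
  exact Set.ncard_pair (fun h => sigInv_ne_sig i v h.symm)

lemma MG_adj (u w : ZMod m × ZMod 8) :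
    (MG m).Adj u w ↔ u ≠ w ∧ (u.1 = w.1 ∧ w.2 = pi8 u.2) := by
  show u ≠ w ∧ ((u.1 = w.1 ∧ w.2 = pi8 u.2) ∨ (w.1 = u.1 ∧ u.2 = pi8 w.2)) ↔ _
  constructor
  · rintro ⟨hne, h | ⟨h1, h2⟩⟩
    · exact ⟨hne, h⟩
    · exact ⟨hne, h1.symm, (pi8_eq_iff u.2 w.2).mp h2⟩
  · rintro ⟨hne, h⟩; exact ⟨hne, Or.inl h⟩

lemma MG_deg (v : ZMod m × ZMod 8) : ((MG m).neighborSet v).ncard = 1 := by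
  have : (MG m).neighborSet v = {(v.1, pi8 v.2)} := by
    ext w
    simp only [mem_neighborSet, MG_adj, Set.mem_singleton_iff]
    constructor
    · rintro ⟨-, h1, h2⟩
      exact Prod.ext h1.symm h2
    · rintro rfl
      refine ⟨?_, rfl, rfl⟩
      intro h
      exact pi8_ne v.2 (congrArg Prod.snd h).symm
  rw [this, Set.ncard_singleton]

end Graphs

section Components

variable {m : ℕ}

def iota (i : Fin 4) (v : ZMod m × ZMod 8) : ZMod m := v.1 - chi m i v.2

lemma iota_sig (i : Fin 4) (v : ZMod m × ZMod 8) : iota i (sig m i v) = iota i v := by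
  show v.1 + chi m i (tau i v.2) - chi m i v.2 - chi m i (tau i v.2) = v.1 - chi m i v.2
  ring

lemma iota_adj {i : Fin 4} {u w : ZMod m × ZMod 8} (h : (Fc m i).Adj u w) :
    iota i u = iota i w := by
  rw [Fc_adj] at h
  rcases h.2 with h | h
  · rw [h, iota_sig]
  · rw [h, ← iota_sig i (sigInv m i u), sig_sigInv]

lemma iota_reachable {i : Fin 4} {u w : ZMod m × ZMod 8} (h : (Fc m i).Reachable u w) :
    iota i u = iota i w := by
  obtain ⟨p⟩ := h
  induction p with
  | nil => rfl
  | cons h _ ih => exact (iota_adj h).trans ih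

lemma sig_iter_snd (i : Fin 4) (k : ℕ) (v : ZMod m × ZMod 8) :
    ((sig m i)^[k] v).2 = (tau i)^[k] v.2 := by
  induction k with
  | zero => rfl
  | succ n ih =>
      rw [Function.iterate_succ_apply', Function.iterate_succ_apply', sig_snd, ih]

lemma iota_iter (i : Fin 4) (k : ℕ) (v : ZMod m × ZMod 8) :
    iota i ((sig m i)^[k] v) = iota i v := by
  induction k with
  | zero => rfl
  | succ n ih => rw [Function.iterate_succ_apply', iota_sig, ih]

lemma reach_iter (i : Fin 4) (k : ℕ) (v : ZMod m × ZMod 8) :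
    (Fc m i).Reachable v ((sig m i)^[k] v) := by
  induction k with
  | zero => exact Reachable.refl v
  | succ n ih =>
      refine ih.trans ?_
      rw [Function.iterate_succ_apply']
      refine Adj.reachable ?_
      rw [Fc_adj]
      exact ⟨(sig_ne i _).symm, Or.inl rfl⟩

lemma Fc_supp (i : Fin 4) (v : ZMod m × ZMod 8) :
    ((Fc m i).connectedComponentMk v).supp
      = Set.range (fun y : ZMod 8 => (v.1 - chi m i v.2 + chi m i y, y)) := by
  ext u
  rw [ConnectedComponent.mem_supp_iff, ConnectedComponent.eq]
  constructor
  · intro h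
    have hio : iota i u = iota i v := iota_reachable h
    refine ⟨u.2, ?_⟩
    refine Prod.ext ?_ rfl
    show v.1 - chi m i v.2 + chi m i u.2 = u.1
    have : u.1 - chi m i u.2 = v.1 - chi m i v.2 := hio
    linear_combination -this
  · rintro ⟨y, rfl⟩
    obtain ⟨k, hk⟩ := tau_orbit i v.2 y
    have h2 : ((sig m i)^[k.val] v).2 = y := by rw [sig_iter_snd, hk]
    have h1 : iota i ((sig m i)^[k.val] v) = iota i v := iota_iter i k.val v
    have heq : (sig m i)^[k.val] v = (v.1 - chi m i v.2 + chi m i y, y) := by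
      refine Prod.ext ?_ h2
      show ((sig m i)^[k.val] v).1 = v.1 - chi m i v.2 + chi m i y
      have : ((sig m i)^[k.val] v).1 - chi m i ((sig m i)^[k.val] v).2
          = v.1 - chi m i v.2 := h1
      rw [h2] at this
      linear_combination this
    have hr := (reach_iter i k.val v).symm
    rw [heq] at hr
    exact hr

lemma Fc_supp_ncard (i : Fin 4) (v : ZMod m × ZMod 8) :
    ((Fc m i).connectedComponentMk v).supp.ncard = 8 := by
  rw [Fc_supp, ← Set.image_univ,
    Set.ncard_image_of_injective _ (fun a b h => congrArg Prod.snd h),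
    Set.ncard_univ, Nat.card_eq_fintype_card, ZMod.card]

end Components

lemma colAdj_symm : ∀ i x y, colAdj i x y → colAdj i y x := by decide
lemma colAdj_ne : ∀ i x y, colAdj i x y → x ≠ y := by decide

section Main

variable {m : ℕ}

lemma col_adj (i : Fin 4) (u w : ZMod m × ZMod 8) (hne : u ≠ w) (hj : u.1 = w.1)
    (hca : colAdj i u.2 w.2) : (Fc m i).Adj u w := by
  rw [Fc_adj]
  refine ⟨hne, ?_⟩
  rcases hca with ⟨hy, heq⟩ | ⟨hx, heq⟩
  · left
    refine Prod.ext ?_ hy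
    show w.1 = u.1 + chi m i (tau i u.2) - chi m i u.2
    have hc := chi_congr (m := m) heq
    linear_combination -hj + hc
  · right
    refine (eq_sig_iff i u w).mp ?_
    refine Prod.ext ?_ hx
    show u.1 = w.1 + chi m i (tau i w.2) - chi m i w.2
    have hc := chi_congr (m := m) heq
    linear_combination hj + hc

lemma cross_adj (i : Fin 4) (u w : ZMod m × ZMod 8) (hne : u ≠ w) (hj : w.1 = u.1 + 1)
    (hy : w.2 = u.2 + 4) (hcr : crossOwn i u.2) : (Fc m i).Adj u w := by
  rw [Fc_adj]
  refine ⟨hne, ?_⟩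
  rcases hcr with ⟨hτ, hf, ht⟩ | ⟨hτ', ht', hf'⟩
  · left
    refine Prod.ext ?_ (hy.trans hτ.symm)
    show w.1 = u.1 + chi m i (tau i u.2) - chi m i u.2
    have h1 : chi m i (tau i u.2) = 1 := by rw [hτ]; exact chi_of_true ht
    rw [h1, chi_of_false hf, hj]; ring
  · right
    refine (eq_sig_iff i u w).mp ?_
    refine Prod.ext ?_ (by show u.2 = tau i w.2; rw [hy, hτ'])
    show u.1 = w.1 + chi m i (tau i w.2) - chi m i w.2
    have h1 : chi m i (tau i w.2) = 0 := by rw [hy, hτ']; exact chi_of_false hf'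
    have h2 : chi m i w.2 = 1 := by rw [hy]; exact chi_of_true ht'
    rw [h1, h2, hj]; ring

lemma Fc_adj_fwd (i : Fin 4) (a b : ZMod m × ZMod 8) (h : b = sig m i a) :
    (a.1 = b.1 ∧ colAdj i a.2 b.2) ∨
    (b.1 = a.1 + 1 ∧ b.2 = a.2 + 4 ∧ crossOwn i a.2) ∨
    (a.1 = b.1 + 1 ∧ a.2 = b.2 + 4 ∧ crossOwn i b.2) := by
  obtain ⟨j, x⟩ := a
  subst h
  rcases sameB_cases i x with heq | ⟨hf, ht, hτ⟩ | ⟨ht, hf, hx⟩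
  · left
    refine ⟨?_, Or.inl ⟨rfl, heq⟩⟩
    show j = j + chi m i (tau i x) - chi m i x
    rw [chi_congr heq]; ring
  · right; left
    refine ⟨?_, hτ, Or.inl ⟨hτ, hf, hτ ▸ ht⟩⟩
    show j + chi m i (tau i x) - chi m i x = j + 1
    rw [chi_of_true ht, chi_of_false hf]; ring
  · right; right
    refine ⟨?_, hx, Or.inr ⟨?_, ?_, hf⟩⟩
    · show j = (j + chi m i (tau i x) - chi m i x) + 1
      rw [chi_of_false hf, chi_of_true ht]; ring
    · show tau i (tau i x + 4) = tau i x
      rw [← hx]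
    · show inB i (tau i x + 4) = true
      rw [← hx]; exact ht

lemma Fc_adj_iff (i : Fin 4) (u w : ZMod m × ZMod 8) :
    (Fc m i).Adj u w ↔ u ≠ w ∧
      ((u.1 = w.1 ∧ colAdj i u.2 w.2) ∨
       (w.1 = u.1 + 1 ∧ w.2 = u.2 + 4 ∧ crossOwn i u.2) ∨
       (u.1 = w.1 + 1 ∧ u.2 = w.2 + 4 ∧ crossOwn i w.2)) := by
  constructor
  · intro h
    rw [Fc_adj] at h
    obtain ⟨hne, hs | hs⟩ := h
    · exact ⟨hne, Fc_adj_fwd i u w hs⟩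
    · have hu : u = sig m i w := (eq_sig_iff i u w).mpr hs
      refine ⟨hne, ?_⟩
      rcases Fc_adj_fwd i w u hu with ⟨h1, h2⟩ | ⟨h1, h2, h3⟩ | ⟨h1, h2, h3⟩
      · exact Or.inl ⟨h1.symm, colAdj_symm i w.2 u.2 h2⟩
      · exact Or.inr (Or.inr ⟨h1, h2, h3⟩)
      · exact Or.inr (Or.inl ⟨h1, h2, h3⟩)
  · rintro ⟨hne, ⟨hj, hca⟩ | ⟨hj, hy, hcr⟩ | ⟨hj, hy, hcr⟩⟩
    · exact col_adj i u w hne hj hca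
    · exact cross_adj i u w hne hj hy hcr
    · exact (cross_adj i w u hne.symm hj hy hcr).symm

variable (m) in
def Gm : SimpleGraph (ZMod m × ZMod 8) :=
  SimpleGraph.fromRel (fun x y : ZMod m × ZMod 8 =>
    x - y = ((1 : ZMod m), (4 : ZMod 8)) ∨ x.1 = y.1)

lemma sub_eq_one_four (a b : ZMod m × ZMod 8) :
    a - b = ((1 : ZMod m), (4 : ZMod 8)) ↔ (a.1 = b.1 + 1 ∧ a.2 = b.2 + 4) := by
  rw [Prod.ext_iff]
  simp only [Prod.fst_sub, Prod.snd_sub, sub_eq_iff_eq_add]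
  constructor
  · rintro ⟨h1, h2⟩; exact ⟨by rw [h1, add_comm], by rw [h2, add_comm]⟩
  · rintro ⟨h1, h2⟩; exact ⟨by rw [h1, add_comm], by rw [h2, add_comm]⟩

lemma Gm_adj (u w : ZMod m × ZMod 8) :
    (Gm m).Adj u w ↔ u ≠ w ∧
      (u.1 = w.1 ∨ (w.1 = u.1 + 1 ∧ w.2 = u.2 + 4) ∨ (u.1 = w.1 + 1 ∧ u.2 = w.2 + 4)) := by
  show u ≠ w ∧ ((u - w = _ ∨ u.1 = w.1) ∨ (w - u = _ ∨ w.1 = u.1)) ↔ _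
  rw [sub_eq_one_four, sub_eq_one_four]
  constructor
  · rintro ⟨hne, (h | h) | (h | h)⟩
    · exact ⟨hne, Or.inr (Or.inr h)⟩
    · exact ⟨hne, Or.inl h⟩
    · exact ⟨hne, Or.inr (Or.inl h)⟩
    · exact ⟨hne, Or.inl h.symm⟩
  · rintro ⟨hne, h | h | h⟩
    · exact ⟨hne, Or.inl (Or.inr h)⟩
    · exact ⟨hne, Or.inr (Or.inl h)⟩
    · exact ⟨hne, Or.inl (Or.inl h)⟩

lemma Fc_le (i : Fin 4) : Fc m i ≤ Gm m := by
  intro u w h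
  rw [Fc_adj_iff] at h
  rw [Gm_adj]
  obtain ⟨hne, hc⟩ := h
  refine ⟨hne, ?_⟩
  rcases hc with ⟨h1, -⟩ | ⟨h1, h2, -⟩ | ⟨h1, h2, -⟩
  · exact Or.inl h1
  · exact Or.inr (Or.inl ⟨h1, h2⟩)
  · exact Or.inr (Or.inr ⟨h1, h2⟩)

lemma MG_le : MG m ≤ Gm m := by
  intro u w h
  rw [MG_adj] at h
  rw [Gm_adj]
  exact ⟨h.1, Or.inl h.2.1⟩

end Main

end Stmt10Aux

open Stmt10Aux in
theorem stmt_10 (m : ℕ) (hm : 3 ≤ m) :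
    CycleDecompPM
      (SimpleGraph.fromRel (fun x y : ZMod m × ZMod 8 =>
        x - y = ((1 : ZMod m), (4 : ZMod 8)) ∨ x.1 = y.1))
      (fun _ : Fin 4 => 8) := by
  haveI : NeZero m := ⟨by omega⟩
  have hnat : ∀ k : ℕ, k < m → ((k : ZMod m) = 0) → k = 0 := by
    intro k hk h
    have := congrArg ZMod.val h
    rwa [ZMod.val_natCast, Nat.mod_eq_of_lt hk, ZMod.val_zero] at this
  have h1 : (1 : ZMod m) ≠ 0 := by
    intro h
    exact one_ne_zero (hnat 1 (by omega) (by exact_mod_cast h))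
  have h2 : (2 : ZMod m) ≠ 0 := by
    intro h
    exact two_ne_zero (hnat 2 (by omega) (by exact_mod_cast h))
  have exclA : ∀ a : ZMod m, a ≠ a + 1 := fun a h => h1 (left_eq_add.mp h)
  show CycleDecompPM (Gm m) (fun _ : Fin 4 => 8)
  refine ⟨fun i => Fc m i, MG m,
    fun i => ⟨Fc_le i, Fc_deg i, fun v => Fc_supp_ncard i v⟩, MG_le, MG_deg, ?_⟩
  intro e he
  induction e using Sym2.ind with
  | _ u w =>
  rw [SimpleGraph.mem_edgeSet, Gm_adj] at he
  obtain ⟨hne, hcase⟩ := he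
  have key : ∀ u w : ZMod m × ZMod 8, u ≠ w → w.1 = u.1 + 1 → w.2 = u.2 + 4 →
      ((∃! i, s(u, w) ∈ (Fc m i).edgeSet) ∧ s(u, w) ∉ (MG m).edgeSet) := by
    intro u w hne ha hb
    obtain ⟨i, hcr⟩ := crossOwn_exists u.2
    constructor
    · refine ⟨i, (SimpleGraph.mem_edgeSet _).mpr (cross_adj i u w hne ha hb hcr), ?_⟩
      intro i' h'
      rw [SimpleGraph.mem_edgeSet, Fc_adj_iff] at h'
      rcases h'.2 with ⟨hj', -⟩ | ⟨-, -, hcr'⟩ | ⟨hj', -, -⟩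
      · exact absurd (hj'.trans ha) (exclA u.1)
      · exact crossOwn_unique i' i u.2 hcr' hcr
      · exfalso
        apply h2
        have hu : u.1 = u.1 + 1 + 1 := by rw [← ha, ← hj']
        rw [add_assoc] at hu
        have := left_eq_add.mp hu
        rwa [one_add_one_eq_two] at this
    · intro hM
      rw [SimpleGraph.mem_edgeSet, MG_adj] at hM
      exact absurd (hM.2.1.trans ha) (exclA u.1)
  rcases hcase with hcol | ⟨ha, hb⟩ | ⟨ha, hb⟩
  · have hxy : u.2 ≠ w.2 := fun h => hne (Prod.ext hcol h)
    rcases colAdj_or_pi u.2 w.2 hxy with hpi | ⟨i, hca⟩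
    · right
      constructor
      · intro i hFc
        rw [SimpleGraph.mem_edgeSet, Fc_adj_iff] at hFc
        rcases hFc.2 with ⟨-, hca⟩ | ⟨hj', -, -⟩ | ⟨hj', -, -⟩
        · exact colAdj_not_pi i u.2 w.2 hca hpi
        · exact exclA u.1 (hcol.trans hj')
        · exact exclA w.1 (hcol.symm.trans hj')
      · exact (SimpleGraph.mem_edgeSet _).mpr ((MG_adj u w).mpr ⟨hne, hcol, hpi⟩)
    · left
      constructor
      · refine ⟨i, (SimpleGraph.mem_edgeSet _).mpr (col_adj i u w hne hcol hca), ?_⟩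
        intro i' h'
        rw [SimpleGraph.mem_edgeSet, Fc_adj_iff] at h'
        rcases h'.2 with ⟨-, hca'⟩ | ⟨hj', -, -⟩ | ⟨hj', -, -⟩
        · exact colAdj_unique i' i u.2 w.2 hca' hca
        · exact absurd (hcol.trans hj') (exclA u.1)
        · exact absurd (hcol.symm.trans hj') (exclA w.1)
      · intro hM
        rw [SimpleGraph.mem_edgeSet, MG_adj] at hM
        exact colAdj_not_pi i u.2 w.2 hca hM.2.2
  · exact Or.inl (key u w hne ha hb)
  · rw [Sym2.eq_swap]
    exact Or.inl (key w u hne.symm ha hb)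
end

section
/- Let m ≥ 3 be odd. Then the graph C_m[8] (the lexicographic product of an m-cycle with the empty graph on 8 vertices) can be decomposed into two C_8-factors and six C_m-factors. -/
open SimpleGraph

namespace Stmt11Aux

/-- parity map -/
def pr (i : ZMod 8) : ZMod 2 := (i.val : ZMod 2)

/-- base shifts -/
def sv : Fin 6 → ZMod 8 := ![0,2,4,5,6,7]

def xv (m : ℕ) : Fin 6 → ZMod 8 :=
  if m % 8 = 3 then ![0,2,5,6,4,7] else if m % 8 = 5 then ![0,4,2,5,7,6]
  else if m % 8 = 7 then ![0,2,7,5,4,6] else ![0,4,7,6,2,5]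

def yv (m : ℕ) : Fin 6 → ZMod 8 :=
  if m % 8 = 3 then ![0,4,7,5,6,2] else if m % 8 = 5 then ![0,6,2,4,7,5]
  else if m % 8 = 7 then ![0,4,5,2,6,7] else ![0,6,5,7,4,2]

/-- shift of factor `j` at gap `a` -/
def dlt (m : ℕ) (j : Fin 6) (a : ZMod m) : ZMod 8 :=
  if a.val = m - 2 then xv m j else if a.val = m - 1 then yv m j else sv j

/-- partial sums of shifts -/
def Sf (m : ℕ) (j : Fin 6) (a : ZMod m) : ZMod 8 :=
  if a.val = m - 1 then sv j * ((m - 2 : ℕ) : ZMod 8) + xv m j else sv j * (a.val : ZMod 8)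

/-- the six `C_m`-factors -/
def Hfac (m : ℕ) (j : Fin 6) : SimpleGraph (ZMod m × ZMod 8) :=
  fromRel (fun x y => y.1 = x.1 + 1 ∧ y.2 = x.2 + dlt m j x.1)

/-- the two `C_8`-factors -/
def Ffac (m : ℕ) (p : ZMod 2) : SimpleGraph (ZMod m × ZMod 8) :=
  fromRel (fun x y => y.1 = x.1 + 1 ∧ pr x.2 = p ∧ (y.2 = x.2 + 1 ∨ y.2 = x.2 + 3))

/-- parametrization of the 8-cycles -/
def gF (m : ℕ) (p : ZMod 2) (a : ZMod m) (k : ZMod 8) : ZMod m × ZMod 8 :=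
  (if pr k = p then a else a + 1, k)

-- basic decidable facts
lemma pr_add_one (k : ZMod 8) : pr (k + 1) = pr k + 1 := by revert k; decide
lemma pr_add_three (k : ZMod 8) : pr (k + 3) = pr k + 1 := by revert k; decide
lemma pr_cases (k : ZMod 8) : pr k = 0 ∨ pr k = 1 := by revert k; decide

lemma sv_inj : Function.Injective sv := by decide
lemma xv_inj (m : ℕ) : Function.Injective (xv m) := by
  unfold xv; split_ifs <;> decide
lemma yv_inj (m : ℕ) : Function.Injective (yv m) := by
  unfold yv; split_ifs <;> decide

lemma sv_ne (j : Fin 6) : sv j ≠ 1 ∧ sv j ≠ 3 := by revert j; decide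
lemma xv_ne (m : ℕ) (j : Fin 6) : xv m j ≠ 1 ∧ xv m j ≠ 3 := by
  unfold xv; split_ifs <;> revert j <;> decide
lemma yv_ne (m : ℕ) (j : Fin 6) : yv m j ≠ 1 ∧ yv m j ≠ 3 := by
  unfold yv; split_ifs <;> revert j <;> decide

lemma sv_surj (c : ZMod 8) (h1 : c ≠ 1) (h3 : c ≠ 3) : ∃ j, sv j = c := by
  revert c; decide
lemma xv_surj (m : ℕ) (c : ZMod 8) (h1 : c ≠ 1) (h3 : c ≠ 3) : ∃ j, xv m j = c := by
  unfold xv; split_ifs <;> revert c <;> decide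
lemma yv_surj (m : ℕ) (c : ZMod 8) (h1 : c ≠ 1) (h3 : c ≠ 3) : ∃ j, yv m j = c := by
  unfold yv; split_ifs <;> revert c <;> decide

lemma dlt_inj (m : ℕ) (a : ZMod m) : Function.Injective (fun j => dlt m j a) := by
  unfold dlt; split_ifs
  · exact xv_inj m
  · exact yv_inj m
  · exact sv_inj

lemma dlt_ne (m : ℕ) (j : Fin 6) (a : ZMod m) : dlt m j a ≠ 1 ∧ dlt m j a ≠ 3 := by
  unfold dlt; split_ifs
  · exact xv_ne m j
  · exact yv_ne m j
  · exact sv_ne j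

lemma dlt_surj (m : ℕ) (a : ZMod m) (c : ZMod 8) (h1 : c ≠ 1) (h3 : c ≠ 3) :
    ∃ j, dlt m j a = c := by
  unfold dlt; split_ifs
  · exact xv_surj m c h1 h3
  · exact yv_surj m c h1 h3
  · exact sv_surj c h1 h3

/-- key identity -/
lemma keyid (m : ℕ) (hm : 3 ≤ m) (hmo : Odd m) (j : Fin 6) :
    sv j * ((m - 2 : ℕ) : ZMod 8) + xv m j + yv m j = 0 := by
  have h2 : m % 2 = 1 := Nat.odd_iff.mp hmo
  have h8 : m % 8 = 1 ∨ m % 8 = 3 ∨ m % 8 = 5 ∨ m % 8 = 7 := by omega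
  have hc : ((m - 2 : ℕ) : ZMod 8) = (((m - 2) % 8 : ℕ) : ZMod 8) :=
    (ZMod.natCast_mod _ 8).symm
  rcases h8 with h | h | h | h
  · have : (m - 2) % 8 = 7 := by omega
    rw [hc, this]; unfold xv yv
    rw [if_neg (by omega), if_neg (by omega), if_neg (by omega),
        if_neg (by omega), if_neg (by omega), if_neg (by omega)]
    revert j; decide
  · have : (m - 2) % 8 = 1 := by omega
    rw [hc, this]; unfold xv yv
    rw [if_pos h, if_pos h]
    revert j; decide
  · have : (m - 2) % 8 = 3 := by omega
    rw [hc, this]; unfold xv yv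
    rw [if_neg (by omega), if_pos h, if_neg (by omega), if_pos h]
    revert j; decide
  · have : (m - 2) % 8 = 5 := by omega
    rw [hc, this]; unfold xv yv
    rw [if_neg (by omega), if_neg (by omega), if_pos h,
        if_neg (by omega), if_neg (by omega), if_pos h]
    revert j; decide

/-- generic: identify connected component support -/
theorem supp_eq {V : Type*} (H : SimpleGraph V) (v : V) (s : Set V)
    (hv : v ∈ s) (hcl : ∀ x ∈ s, ∀ y, H.Adj x y → y ∈ s)
    (hre : ∀ x ∈ s, H.Reachable v x) :
    (H.connectedComponentMk v).supp = s := by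
  have key : ∀ {x u : V}, H.Walk x u → x ∈ s → u ∈ s := by
    intro x u w
    induction w with
    | nil => exact id
    | cons h _ ih => exact fun hx => ih (hcl _ hx _ h)
  ext u
  rw [ConnectedComponent.mem_supp_iff, ConnectedComponent.eq]
  constructor
  · intro h
    obtain ⟨w⟩ := h
    exact key w.reverse hv
  · intro hu; exact (hre u hu).symm

theorem ncard_range {α β : Type*} (g : α → β) (hg : Function.Injective g) [Fintype α] :
    (Set.range g).ncard = Fintype.card α := by
  rw [← Set.image_univ, Set.ncard_image_of_injective _ hg, Set.ncard_univ,
    Nat.card_eq_fintype_card]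

def idx8 (j : Fin 6) : Fin 8 := ⟨j.val + 2, by omega⟩

section M
variable (m : ℕ) (hm : 3 ≤ m)

lemma neZero (hm : 3 ≤ m) : NeZero m := ⟨by omega⟩

/-- step lemma -/
lemma Sf_step (hm : 3 ≤ m) (hmo : Odd m) (j : Fin 6) (a : ZMod m) :
    Sf m j (a + 1) = Sf m j a + dlt m j a := by
  haveI : NeZero m := neZero m hm
  haveI : Fact (1 < m) := ⟨by omega⟩
  have hn : a.val < m := a.val_lt
  have hval : (a + 1).val = (a.val + 1) % m := by
    rw [ZMod.val_add, ZMod.val_one]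
  rcases Nat.lt_or_ge a.val (m - 2) with h | h
  · -- generic gap
    have h1 : (a + 1).val = a.val + 1 := by
      rw [hval]; exact Nat.mod_eq_of_lt (by omega)
    unfold Sf dlt
    rw [h1, if_neg (show ¬(a.val + 1 = m - 1) by omega),
      if_neg (show ¬(a.val = m - 1) by omega),
      if_neg (show ¬(a.val = m - 2) by omega),
      if_neg (show ¬(a.val = m - 1) by omega)]
    push_cast
    ring
  · rcases Nat.eq_or_lt_of_le h with h2 | h2
    · -- a.val = m - 2
      have h1 : (a + 1).val = m - 1 := by
        rw [hval, Nat.mod_eq_of_lt (by omega)]; omega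
      unfold Sf dlt
      rw [h1, if_pos rfl, if_neg (show ¬(a.val = m - 1) by omega),
        if_pos h2.symm, ← h2]
    · -- a.val = m - 1
      have hv1 : a.val = m - 1 := by omega
      have h1 : (a + 1).val = 0 := by
        rw [hval, show a.val + 1 = m by omega]; exact Nat.mod_self m
      unfold Sf dlt
      rw [h1, if_neg (show ¬((0:ℕ) = m - 1) by omega), if_pos hv1,
        if_neg (show ¬(a.val = m - 2) by omega), if_pos hv1]
      push_cast
      rw [mul_zero]
      exact (keyid m hm hmo j).symm

variable {m : ℕ}

lemma one_ne (hm : 3 ≤ m) (a : ZMod m) : a + 1 ≠ a := by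
  haveI : NeZero m := neZero m hm
  intro h
  have h1 : (1 : ZMod m) = 0 := by
    have := congrArg (· - a) h
    simpa using this
  have := Nat.le_of_dvd one_pos ((ZMod.natCast_eq_zero_iff 1 m).mp (by exact_mod_cast h1))
  omega

lemma two_ne (hm : 3 ≤ m) (hmo : Odd m) (a : ZMod m) : a + 1 ≠ a - 1 := by
  haveI : NeZero m := neZero m hm
  intro h
  have h1 : ((2 : ℕ) : ZMod m) = 0 := by
    have := congrArg (· - (a - 1)) h
    push_cast
    simpa [sub_sub, one_add_one_eq_two] using this
  have := Nat.le_of_dvd two_pos ((ZMod.natCast_eq_zero_iff 2 m).mp h1)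
  omega

lemma Hfac_adj (hm : 3 ≤ m) (j : Fin 6) (x y : ZMod m × ZMod 8) :
    (Hfac m j).Adj x y ↔
      (y.1 = x.1 + 1 ∧ y.2 = x.2 + dlt m j x.1) ∨
      (x.1 = y.1 + 1 ∧ x.2 = y.2 + dlt m j y.1) := by
  rw [Hfac, fromRel_adj]
  constructor
  · tauto
  · intro h
    refine ⟨?_, h⟩
    rcases h with ⟨h1, _⟩ | ⟨h1, _⟩ <;> intro he <;> rw [he] at h1
    · exact one_ne hm y.1 h1.symm
    · exact one_ne hm y.1 h1.symm

lemma Ffac_adj (hm : 3 ≤ m) (p : ZMod 2) (x y : ZMod m × ZMod 8) :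
    (Ffac m p).Adj x y ↔
      (y.1 = x.1 + 1 ∧ pr x.2 = p ∧ (y.2 = x.2 + 1 ∨ y.2 = x.2 + 3)) ∨
      (x.1 = y.1 + 1 ∧ pr y.2 = p ∧ (x.2 = y.2 + 1 ∨ x.2 = y.2 + 3)) := by
  rw [Ffac, fromRel_adj]
  constructor
  · tauto
  · intro h
    refine ⟨?_, h⟩
    rcases h with ⟨h1, _⟩ | ⟨h1, _⟩ <;> intro he <;> rw [he] at h1
    · exact one_ne hm y.1 h1.symm
    · exact one_ne hm y.1 h1.symm

lemma Hfac_nbr (hm : 3 ≤ m) (hmo : Odd m) (j : Fin 6) (v : ZMod m × ZMod 8) :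
    (Hfac m j).neighborSet v =
      {(v.1 + 1, v.2 + dlt m j v.1), (v.1 - 1, v.2 - dlt m j (v.1 - 1))} := by
  ext w
  rw [mem_neighborSet, Hfac_adj hm]
  constructor
  · rintro (⟨h1, h2⟩ | ⟨h1, h2⟩)
    · left
      exact Prod.ext h1 h2
    · right
      have hw1 : w.1 = v.1 - 1 := by rw [h1]; ring
      refine Prod.ext hw1 ?_
      rw [← hw1, h2]; ring
  · rintro (h | h) <;> rw [h]
    · left; exact ⟨rfl, rfl⟩
    · right
      constructor
      · simp
      · simp
lemma Hfac_deg (hm : 3 ≤ m) (hmo : Odd m) (j : Fin 6) (v : ZMod m × ZMod 8) :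
    ((Hfac m j).neighborSet v).ncard = 2 := by
  rw [Hfac_nbr hm hmo]
  exact Set.ncard_pair (by
    intro h
    exact two_ne hm hmo v.1 (congrArg Prod.fst h))

-- ZMod 2 / ZMod 8 decidable facts
lemma pr_sub_one (k : ZMod 8) : pr (k - 1) = pr k + 1 := by revert k; decide
lemma pr_sub_three (k : ZMod 8) : pr (k - 3) = pr k + 1 := by revert k; decide
lemma zmod2_two (p : ZMod 2) : p + 1 + 1 = p := by revert p; decide
lemma zmod2_ne {q p : ZMod 2} (h : q ≠ p) : q = p + 1 := by revert q p; decide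
lemma zmod2_succ_ne (p : ZMod 2) : p + 1 ≠ p := by revert p; decide
lemma zmod8_13 (k : ZMod 8) : k + 1 ≠ k + 3 := by revert k; decide
lemma zmod8_m13 (k : ZMod 8) : k - 1 ≠ k - 3 := by revert k; decide

lemma Ffac_nbr1 (hm : 3 ≤ m) (p : ZMod 2) (v : ZMod m × ZMod 8) (hp : pr v.2 = p) :
    (Ffac m p).neighborSet v = {(v.1 + 1, v.2 + 1), (v.1 + 1, v.2 + 3)} := by
  ext w
  rw [mem_neighborSet, Ffac_adj hm]
  constructor
  · rintro (⟨h1, _, h3 | h3⟩ | ⟨h1, h2, h3⟩)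
    · left; exact Prod.ext h1 h3
    · right; exact Prod.ext h1 h3
    · exfalso
      rcases h3 with h3 | h3
      · rw [h3, pr_add_one, h2] at hp
        exact zmod2_succ_ne p hp
      · rw [h3, pr_add_three, h2] at hp
        exact zmod2_succ_ne p hp
  · rintro (h | h) <;> rw [h] <;> left
    · exact ⟨rfl, hp, Or.inl rfl⟩
    · exact ⟨rfl, hp, Or.inr rfl⟩

lemma Ffac_nbr2 (hm : 3 ≤ m) (p : ZMod 2) (v : ZMod m × ZMod 8) (hp : pr v.2 ≠ p) :
    (Ffac m p).neighborSet v = {(v.1 - 1, v.2 - 1), (v.1 - 1, v.2 - 3)} := by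
  have hp1 : pr v.2 = p + 1 := zmod2_ne hp
  ext w
  rw [mem_neighborSet, Ffac_adj hm]
  constructor
  · rintro (⟨h1, h2, h3⟩ | ⟨h1, h2, h3 | h3⟩)
    · exact absurd h2 hp
    · left
      refine Prod.ext (by rw [h1]; ring) ?_
      show w.2 = v.2 - 1
      rw [h3]; ring
    · right
      refine Prod.ext (by rw [h1]; ring) ?_
      show w.2 = v.2 - 3
      rw [h3]; ring
  · rintro (h | h) <;> rw [h] <;> right
    · refine ⟨by simp, ?_, Or.inl (by ring)⟩
      show pr (v.2 - 1) = p
      rw [pr_sub_one, hp1, zmod2_two]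
    · refine ⟨by simp, ?_, Or.inr (by ring)⟩
      show pr (v.2 - 3) = p
      rw [pr_sub_three, hp1, zmod2_two]

lemma Ffac_deg (hm : 3 ≤ m) (p : ZMod 2) (v : ZMod m × ZMod 8) :
    ((Ffac m p).neighborSet v).ncard = 2 := by
  by_cases hp : pr v.2 = p
  · rw [Ffac_nbr1 hm p v hp]
    exact Set.ncard_pair (fun h => zmod8_13 v.2 (congrArg Prod.snd h))
  · rw [Ffac_nbr2 hm p v hp]
    exact Set.ncard_pair (fun h => zmod8_m13 v.2 (congrArg Prod.snd h))

lemma Hfac_supp (hm : 3 ≤ m) (hmo : Odd m) (j : Fin 6) (v : ZMod m × ZMod 8) :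
    ((Hfac m j).connectedComponentMk v).supp =
      Set.range (fun b : ZMod m => ((b, v.2 + Sf m j b - Sf m j v.1) : ZMod m × ZMod 8)) := by
  haveI : NeZero m := neZero m hm
  apply supp_eq
  · exact ⟨v.1, by simp⟩
  · rintro x ⟨b, rfl⟩ y hadj
    dsimp only at hadj ⊢
    rw [Hfac_adj hm] at hadj
    rcases hadj with ⟨h1, h2⟩ | ⟨h1, h2⟩
    · dsimp only at h1 h2
      refine ⟨b + 1, Prod.ext h1.symm ?_⟩
      dsimp only
      rw [Sf_step m hm hmo j b, h2]
      ring
    · dsimp only at h1 h2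
      refine ⟨y.1, Prod.ext rfl ?_⟩
      dsimp only
      have hb : Sf m j b = Sf m j y.1 + dlt m j y.1 := by
        rw [h1]; exact Sf_step m hm hmo j y.1
      rw [hb] at h2
      linear_combination h2
  · rintro x ⟨b, rfl⟩
    dsimp only
    have key : ∀ n : ℕ, (Hfac m j).Reachable v
        (((v.1 + (n : ZMod m), v.2 + Sf m j (v.1 + (n : ZMod m)) - Sf m j v.1) :
          ZMod m × ZMod 8)) := by
      intro n
      induction n with
      | zero => simpa using Reachable.refl v
      | succ n ih =>
        refine ih.trans (Adj.reachable ?_)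
        rw [Hfac_adj hm]
        left
        refine ⟨by push_cast; ring, ?_⟩
        dsimp only
        rw [show v.1 + ((n+1 : ℕ) : ZMod m) = (v.1 + (n : ZMod m)) + 1 by push_cast; ring]
        rw [Sf_step m hm hmo]
        ring
    have hb : b = v.1 + (((b - v.1).val : ℕ) : ZMod m) := by
      rw [ZMod.natCast_val, ZMod.cast_id]; ring
    rw [hb]
    exact key _

lemma Hfac_card (hm : 3 ≤ m) (hmo : Odd m) (j : Fin 6) (v : ZMod m × ZMod 8) :
    ((Hfac m j).connectedComponentMk v).supp.ncard = m := by
  haveI : NeZero m := neZero m hm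
  rw [Hfac_supp hm hmo j v, ncard_range _ (fun b b' h => congrArg Prod.fst h), ZMod.card]

lemma pr_add_six (k : ZMod 8) : pr (k + 6) = pr k := by revert k; decide

lemma gF_adj1 (hm : 3 ≤ m) (p : ZMod 2) (a : ZMod m) (k : ZMod 8) (h : pr k = p) :
    (Ffac m p).Adj (gF m p a k) (gF m p a (k + 1)) := by
  have e1 : gF m p a k = (a, k) := by rw [gF, if_pos h]
  have e2 : gF m p a (k + 1) = (a + 1, k + 1) := by
    rw [gF, if_neg (by rw [pr_add_one, h]; exact zmod2_succ_ne p)]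
  rw [e1, e2, Ffac_adj hm]
  left
  exact ⟨rfl, h, Or.inl rfl⟩

lemma gF_adj3 (hm : 3 ≤ m) (p : ZMod 2) (a : ZMod m) (k : ZMod 8) (h : pr k = p) :
    (Ffac m p).Adj (gF m p a k) (gF m p a (k + 3)) := by
  have e1 : gF m p a k = (a, k) := by rw [gF, if_pos h]
  have e2 : gF m p a (k + 3) = (a + 1, k + 3) := by
    rw [gF, if_neg (by rw [pr_add_three, h]; exact zmod2_succ_ne p)]
  rw [e1, e2, Ffac_adj hm]
  left
  exact ⟨rfl, h, Or.inr rfl⟩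

lemma gF_reach (hm : 3 ≤ m) (p : ZMod 2) (a : ZMod m) (k : ZMod 8) (hk : pr k = p) :
    ∀ d : ZMod 8, (Ffac m p).Reachable (gF m p a k) (gF m p a (k + d)) := by
  have R6 : ∀ k', pr k' = p →
      (Ffac m p).Reachable (gF m p a k') (gF m p a (k' + 6)) := by
    intro k' h
    have h6 : pr (k' + 6) = p := by rw [pr_add_six, h]
    have e : k' + 6 + 3 = k' + 1 := by
      rw [add_assoc, show (6 : ZMod 8) + 3 = 1 from by decide]
    have h3 := (gF_adj3 hm p a (k' + 6) h6).reachable.symm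
    rw [e] at h3
    exact (gF_adj1 hm p a k' h).reachable.trans h3
  have p6 : pr (k + 6) = p := by rw [pr_add_six, hk]
  have p4 : pr (k + 4) = p := by
    rw [show k + 4 = k + 6 + 6 from by rw [add_assoc, show (6:ZMod 8)+6 = 4 from by decide], pr_add_six, p6]
  have p2 : pr (k + 2) = p := by
    rw [show k + 2 = k + 4 + 6 from by rw [add_assoc, show (4:ZMod 8)+6 = 2 from by decide], pr_add_six, p4]
  have r6 := R6 k hk
  have r4 : (Ffac m p).Reachable (gF m p a k) (gF m p a (k + 4)) := by
    have := R6 (k + 6) p6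
    rw [show k + 6 + 6 = k + 4 from by rw [add_assoc, show (6:ZMod 8)+6 = 4 from by decide]] at this
    exact r6.trans this
  have r2 : (Ffac m p).Reachable (gF m p a k) (gF m p a (k + 2)) := by
    have := R6 (k + 4) p4
    rw [show k + 4 + 6 = k + 2 from by rw [add_assoc, show (4:ZMod 8)+6 = 2 from by decide]] at this
    exact r4.trans this
  have r1 := (gF_adj1 hm p a k hk).reachable
  have r7 : (Ffac m p).Reachable (gF m p a k) (gF m p a (k + 7)) := by
    have := (gF_adj1 hm p a (k + 6) p6).reachable
    rw [show k + 6 + 1 = k + 7 from by rw [add_assoc, show (6:ZMod 8)+1 = 7 from by decide]] at this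
    exact r6.trans this
  have r5 : (Ffac m p).Reachable (gF m p a k) (gF m p a (k + 5)) := by
    have := (gF_adj1 hm p a (k + 4) p4).reachable
    rw [show k + 4 + 1 = k + 5 from by rw [add_assoc, show (4:ZMod 8)+1 = 5 from by decide]] at this
    exact r4.trans this
  have r3 : (Ffac m p).Reachable (gF m p a k) (gF m p a (k + 3)) :=
    (gF_adj3 hm p a k hk).reachable
  intro d
  have hd : d = 0 ∨ d = 1 ∨ d = 2 ∨ d = 3 ∨ d = 4 ∨ d = 5 ∨ d = 6 ∨ d = 7 := by
    revert d; decide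
  rcases hd with rfl | rfl | rfl | rfl | rfl | rfl | rfl | rfl
  · rw [add_zero]
  · exact r1
  · exact r2
  · exact r3
  · exact r4
  · exact r5
  · exact r6
  · exact r7

lemma Ffac_supp (hm : 3 ≤ m) (p : ZMod 2) (a : ZMod m) (k : ZMod 8) :
    ((Ffac m p).connectedComponentMk (gF m p a k)).supp = Set.range (gF m p a) := by
  apply supp_eq
  · exact ⟨k, rfl⟩
  · rintro x ⟨k', rfl⟩ y hadj
    by_cases h : pr k' = p
    · have e1 : gF m p a k' = (a, k') := by rw [gF, if_pos h]
      rw [e1] at hadj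
      have hy : y ∈ (Ffac m p).neighborSet (a, k') := hadj
      rw [Ffac_nbr1 hm p (a, k') h] at hy
      simp only [Set.mem_insert_iff, Set.mem_singleton_iff] at hy
      rcases hy with rfl | rfl
      · exact ⟨k' + 1, by
          rw [gF, if_neg (by rw [pr_add_one, h]; exact zmod2_succ_ne p)]⟩
      · exact ⟨k' + 3, by
          rw [gF, if_neg (by rw [pr_add_three, h]; exact zmod2_succ_ne p)]⟩
    · have e1 : gF m p a k' = (a + 1, k') := by rw [gF, if_neg h]
      rw [e1] at hadj
      have hy : y ∈ (Ffac m p).neighborSet (a + 1, k') := hadj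
      rw [Ffac_nbr2 hm p (a + 1, k') h] at hy
      simp only [Set.mem_insert_iff, Set.mem_singleton_iff] at hy
      have hp1 : pr k' = p + 1 := zmod2_ne h
      have ha : a + 1 - 1 = a := by ring
      rcases hy with rfl | rfl
      · refine ⟨k' - 1, ?_⟩
        rw [gF, if_pos (by rw [pr_sub_one, hp1, zmod2_two]), ha]
      · refine ⟨k' - 3, ?_⟩
        rw [gF, if_pos (by rw [pr_sub_three, hp1, zmod2_two]), ha]
  · rintro x ⟨k', rfl⟩
    by_cases h : pr k = p
    · have := gF_reach hm p a k h (k' - k)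
      rwa [show k + (k' - k) = k' from by ring] at this
    · have h1 : pr (k - 1) = p := by rw [pr_sub_one, zmod2_ne h, zmod2_two]
      have hA : (Ffac m p).Adj (gF m p a (k - 1)) (gF m p a k) := by
        have := gF_adj1 hm p a (k - 1) h1
        rwa [show k - 1 + 1 = k from by ring] at this
      have hr := gF_reach hm p a (k - 1) h1 (k' - (k - 1))
      rw [show k - 1 + (k' - (k - 1)) = k' from by ring] at hr
      exact hA.reachable.symm.trans hr

lemma Ffac_card (hm : 3 ≤ m) (p : ZMod 2) (v : ZMod m × ZMod 8) :
    ((Ffac m p).connectedComponentMk v).supp.ncard = 8 := by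
  obtain ⟨a, k, hv⟩ : ∃ a k, gF m p a k = v := by
    by_cases h : pr v.2 = p
    · exact ⟨v.1, v.2, by rw [gF, if_pos h]⟩
    · refine ⟨v.1 - 1, v.2, ?_⟩
      rw [gF, if_neg h, show v.1 - 1 + 1 = v.1 from by ring]
  rw [← hv, Ffac_supp hm, ncard_range _ (fun k k' h => congrArg Prod.snd h), ZMod.card]

/-- the big graph -/
def GG (m : ℕ) : SimpleGraph (ZMod m × ZMod 8) :=
  SimpleGraph.fromRel (fun x y : ZMod m × ZMod 8 => x.1 - y.1 = 1)

/-- the eight factors -/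
def fvec (m : ℕ) : Fin 8 → SimpleGraph (ZMod m × ZMod 8) :=
  ![Ffac m 0, Ffac m 1, Hfac m 0, Hfac m 1, Hfac m 2, Hfac m 3, Hfac m 4, Hfac m 5]


lemma fvec_idx8 (j : Fin 6) : fvec m (idx8 j) = Hfac m j := by
  fin_cases j <;> rfl

lemma fvec_cases (i : Fin 8) : i = 0 ∨ i = 1 ∨ ∃ j : Fin 6, i = idx8 j := by
  revert i; decide

lemma two_ne' (hm : 3 ≤ m) (hmo : Odd m) (a : ZMod m) : a + 1 + 1 ≠ a := by
  haveI : NeZero m := neZero m hm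
  intro h
  have h2 : a + 1 + 1 - a = a - a := congrArg (· - a) h
  have h1 : ((2 : ℕ) : ZMod m) = 0 := by push_cast; linear_combination h2
  have := Nat.le_of_dvd two_pos ((ZMod.natCast_eq_zero_iff 2 m).mp h1)
  have h3 := Nat.odd_iff.mp hmo
  omega

lemma Ffac_le (hm : 3 ≤ m) (hmo : Odd m) (p : ZMod 2) : Ffac m p ≤ GG m := by
  intro x y h
  rw [Ffac_adj hm] at h
  rw [GG, fromRel_adj]
  rcases h with ⟨h1, _⟩ | ⟨h1, _⟩
  · refine ⟨fun he => ?_, Or.inr (by rw [h1]; ring)⟩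
    rw [he] at h1; exact one_ne hm y.1 h1.symm
  · refine ⟨fun he => ?_, Or.inl (by rw [h1]; ring)⟩
    rw [he] at h1; exact one_ne hm y.1 h1.symm

lemma Hfac_le (hm : 3 ≤ m) (hmo : Odd m) (j : Fin 6) : Hfac m j ≤ GG m := by
  intro x y h
  rw [Hfac_adj hm] at h
  rw [GG, fromRel_adj]
  rcases h with ⟨h1, _⟩ | ⟨h1, _⟩
  · refine ⟨fun he => ?_, Or.inr (by rw [h1]; ring)⟩
    rw [he] at h1; exact one_ne hm y.1 h1.symm
  · refine ⟨fun he => ?_, Or.inl (by rw [h1]; ring)⟩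
    rw [he] at h1; exact one_ne hm y.1 h1.symm

lemma memF (hm : 3 ≤ m) (hmo : Odd m) (p : ZMod 2) (x y : ZMod m × ZMod 8)
    (h1 : y.1 = x.1 + 1) :
    s(x,y) ∈ (Ffac m p).edgeSet ↔ (pr x.2 = p ∧ (y.2 = x.2 + 1 ∨ y.2 = x.2 + 3)) := by
  rw [mem_edgeSet, Ffac_adj hm]
  constructor
  · rintro (⟨_, h⟩ | ⟨h2, _⟩)
    · exact h
    · exfalso
      rw [h1] at h2
      exact two_ne' hm hmo x.1 h2.symm
  · intro h
    exact Or.inl ⟨h1, h⟩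

lemma memH (hm : 3 ≤ m) (hmo : Odd m) (j : Fin 6) (x y : ZMod m × ZMod 8)
    (h1 : y.1 = x.1 + 1) :
    s(x,y) ∈ (Hfac m j).edgeSet ↔ y.2 = x.2 + dlt m j x.1 := by
  rw [mem_edgeSet, Hfac_adj hm]
  constructor
  · rintro (⟨_, h⟩ | ⟨h2, _⟩)
    · exact h
    · exfalso
      rw [h1] at h2
      exact two_ne' hm hmo x.1 h2.symm
  · intro h
    exact Or.inl ⟨h1, h⟩

lemma fvec0 : fvec m 0 = Ffac m 0 := rfl
lemma fvec1 : fvec m 1 = Ffac m 1 := rfl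

lemma main_unique (hm : 3 ≤ m) (hmo : Odd m) (x y : ZMod m × ZMod 8)
    (h1 : y.1 = x.1 + 1) :
    ∃! i : Fin 8, s(x,y) ∈ (fvec m i).edgeSet := by
  by_cases hc : y.2 = x.2 + 1 ∨ y.2 = x.2 + 3
  · -- the edge belongs to one of the two C8 factors
    have huniq : ∀ i : Fin 8, s(x,y) ∈ (fvec m i).edgeSet → pr x.2 = 0 → i = 0 := by
      intro i hi hp
      rcases fvec_cases i with rfl | rfl | ⟨j, rfl⟩
      · rfl
      · rw [fvec1, memF hm hmo 1 x y h1] at hi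
        rw [hp] at hi
        exact absurd hi.1 (by decide)
      · exfalso
        rw [fvec_idx8, memH hm hmo j x y h1] at hi
        rcases hc with hc | hc <;> rw [hc] at hi
        · exact (dlt_ne m j x.1).1 (add_left_cancel hi.symm)
        · exact (dlt_ne m j x.1).2 (add_left_cancel hi.symm)
    have huniq1 : ∀ i : Fin 8, s(x,y) ∈ (fvec m i).edgeSet → pr x.2 = 1 → i = 1 := by
      intro i hi hp
      rcases fvec_cases i with rfl | rfl | ⟨j, rfl⟩
      · rw [fvec0, memF hm hmo 0 x y h1] at hi
        rw [hp] at hi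
        exact absurd hi.1 (by decide)
      · rfl
      · exfalso
        rw [fvec_idx8, memH hm hmo j x y h1] at hi
        rcases hc with hc | hc <;> rw [hc] at hi
        · exact (dlt_ne m j x.1).1 (add_left_cancel hi.symm)
        · exact (dlt_ne m j x.1).2 (add_left_cancel hi.symm)
    rcases pr_cases x.2 with hp | hp
    · exact ⟨0, (memF hm hmo 0 x y h1).mpr ⟨hp, hc⟩, fun i hi => huniq i hi hp⟩
    · exact ⟨1, (memF hm hmo 1 x y h1).mpr ⟨hp, hc⟩, fun i hi => huniq1 i hi hp⟩
  · -- the edge belongs to one of the six Cm factors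
    push_neg at hc
    have hc1 : y.2 - x.2 ≠ 1 := fun h => hc.1 (by rw [← h]; ring)
    have hc3 : y.2 - x.2 ≠ 3 := fun h => hc.2 (by rw [← h]; ring)
    obtain ⟨j, hj⟩ := dlt_surj m x.1 (y.2 - x.2) hc1 hc3
    refine ⟨idx8 j, ?_, ?_⟩
    · show s(x,y) ∈ (fvec m (idx8 j)).edgeSet
      rw [fvec_idx8, memH hm hmo j x y h1, hj]
      ring
    · intro i hi
      rcases fvec_cases i with rfl | rfl | ⟨j', rfl⟩
      · rw [fvec0, memF hm hmo 0 x y h1] at hi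
        exact absurd hi.2 (by rintro (h | h) <;> [exact hc.1 h; exact hc.2 h])
      · rw [fvec1, memF hm hmo 1 x y h1] at hi
        exact absurd hi.2 (by rintro (h | h) <;> [exact hc.1 h; exact hc.2 h])
      · rw [fvec_idx8, memH hm hmo j' x y h1] at hi
        have : dlt m j' x.1 = dlt m j x.1 := by
          rw [hj]
          rw [hi]; ring
        exact congrArg idx8 (dlt_inj m x.1 this)

end M
end Stmt11Aux

theorem stmt_11 (m : ℕ) (hm : 3 ≤ m) (hmo : Odd m) :
    CycleDecomp
      (SimpleGraph.fromRel (fun x y : ZMod m × ZMod 8 => x.1 - y.1 = 1))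
      (fun i : Fin 8 => if (i : ℕ) < 2 then 8 else m) := by
  open Stmt11Aux in
  refine ⟨fvec m, ?_, ?_⟩
  · intro i
    fin_cases i
    · exact ⟨Ffac_le (m := m) hm hmo 0,
        fun v => Ffac_deg (m := m) hm 0 v, fun v => Ffac_card (m := m) hm 0 v⟩
    · exact ⟨Ffac_le (m := m) hm hmo 1,
        fun v => Ffac_deg (m := m) hm 1 v, fun v => Ffac_card (m := m) hm 1 v⟩
    · exact ⟨Hfac_le (m := m) hm hmo 0,
        fun v => Hfac_deg (m := m) hm hmo 0 v, fun v => Hfac_card (m := m) hm hmo 0 v⟩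
    · exact ⟨Hfac_le (m := m) hm hmo 1,
        fun v => Hfac_deg (m := m) hm hmo 1 v, fun v => Hfac_card (m := m) hm hmo 1 v⟩
    · exact ⟨Hfac_le (m := m) hm hmo 2,
        fun v => Hfac_deg (m := m) hm hmo 2 v, fun v => Hfac_card (m := m) hm hmo 2 v⟩
    · exact ⟨Hfac_le (m := m) hm hmo 3,
        fun v => Hfac_deg (m := m) hm hmo 3 v, fun v => Hfac_card (m := m) hm hmo 3 v⟩
    · exact ⟨Hfac_le (m := m) hm hmo 4,
        fun v => Hfac_deg (m := m) hm hmo 4 v, fun v => Hfac_card (m := m) hm hmo 4 v⟩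
    · exact ⟨Hfac_le (m := m) hm hmo 5,
        fun v => Hfac_deg (m := m) hm hmo 5 v, fun v => Hfac_card (m := m) hm hmo 5 v⟩
  · intro e he
    induction e using Sym2.ind with
    | _ x y =>
      rw [SimpleGraph.mem_edgeSet, SimpleGraph.fromRel_adj] at he
      obtain ⟨hne, h | h⟩ := he
      · rw [Sym2.eq_swap]
        exact main_unique (m := m) hm hmo y x (by linear_combination h)
      · exact main_unique (m := m) hm hmo x y (by linear_combination h)
end

section
/- Let m ≥ 3 be odd. Then the graph C_m[8] can be decomposed into four C_8-factors and four C_m-factors. -/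
open SimpleGraph

def fgraph {V : Type*} (s : V → V) : SimpleGraph V := SimpleGraph.fromRel (fun x y => y = s x)

lemma fgraph_adj {V : Type*} (s : V → V) (x y : V) :
    (fgraph s).Adj x y ↔ x ≠ y ∧ (y = s x ∨ x = s y) := by
  simp [fgraph, SimpleGraph.fromRel_adj, eq_comm]

section conj
variable {V : Type*} (e : V ≃ V) (s t : V → V)

section
variable (h : ∀ v, e (s v) = t (e v))
include h

lemma conj_adj (x y : V) : (fgraph s).Adj x y ↔ (fgraph t).Adj (e x) (e y) := by
  rw [fgraph_adj, fgraph_adj, ← h, ← h]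
  simp [e.injective.ne_iff, e.injective.eq_iff]

lemma conj_reachable (x y : V) :
    (fgraph s).Reachable x y ↔ (fgraph t).Reachable (e x) (e y) := by
  constructor
  · intro hr
    exact hr.map ⟨e, fun {a b} hab => (conj_adj e s t h a b).1 hab⟩
  · intro hr
    have key : ∀ {a b}, (fgraph t).Adj a b → (fgraph s).Adj (e.symm a) (e.symm b) := by
      intro a b hab
      rw [conj_adj e s t h]
      simpa using hab
    have h2 := hr.map (⟨(e.symm : V → V), key⟩ : fgraph t →g fgraph s)
    have hx : (⟨(e.symm : V → V), key⟩ : fgraph t →g fgraph s) (e x) = x := e.symm_apply_apply x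
    have hy : (⟨(e.symm : V → V), key⟩ : fgraph t →g fgraph s) (e y) = y := e.symm_apply_apply y
    rwa [hx, hy] at h2

lemma conj_neighborSet (v : V) :
    (fgraph s).neighborSet v = e.symm '' ((fgraph t).neighborSet (e v)) := by
  ext w
  simp only [SimpleGraph.mem_neighborSet]
  rw [conj_adj e s t h]
  constructor
  · intro hadj; exact ⟨e w, hadj, by simp⟩
  · rintro ⟨z, hz, rfl⟩; simpa using hz

lemma conj_supp (v : V) :
    ((fgraph s).connectedComponentMk v).supp
      = e.symm '' ((fgraph t).connectedComponentMk (e v)).supp := by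
  ext w
  simp only [SimpleGraph.ConnectedComponent.mem_supp_iff, SimpleGraph.ConnectedComponent.eq]
  constructor
  · intro hr
    refine ⟨e w, ?_, by simp⟩
    simp only [SimpleGraph.ConnectedComponent.mem_supp_iff, SimpleGraph.ConnectedComponent.eq]
    exact (conj_reachable e s t h w v).1 hr
  · rintro ⟨z, hz, rfl⟩
    simp only [SimpleGraph.ConnectedComponent.mem_supp_iff, SimpleGraph.ConnectedComponent.eq] at hz
    rw [conj_reachable e s t h]
    simpa using hz

lemma conj_isCycleFactor (k : ℕ)
    (h1 : ∀ v, ((fgraph t).neighborSet v).ncard = 2)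
    (h2 : ∀ v, ((fgraph t).connectedComponentMk v).supp.ncard = k) :
    IsCycleFactor (fgraph s) k := by
  constructor
  · intro v
    rw [conj_neighborSet e s t h, Set.ncard_image_of_injective _ e.symm.injective]
    exact h1 _
  · intro v
    rw [conj_supp e s t h, Set.ncard_image_of_injective _ e.symm.injective]
    exact h2 _

end
end conj

lemma reach_iter {V : Type*} (s : V → V) (hs : ∀ w, s w ≠ w) (v : V) (k : ℕ) :
    (fgraph s).Reachable v (s^[k] v) := by
  induction k with
  | zero => exact SimpleGraph.Reachable.refl v
  | succ k ih =>
    have hadj : (fgraph s).Adj (s^[k] v) (s^[k+1] v) := by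
      rw [fgraph_adj, Function.iterate_succ_apply']
      exact ⟨(hs _).symm, Or.inl rfl⟩
    exact ih.trans hadj.reachable

section base
variable {m : ℕ} [NeZero m]

def rowS (m : ℕ) : ZMod m × ZMod 8 → ZMod m × ZMod 8 := fun v => (v.1 + 1, v.2)
def colS (m : ℕ) (δ : ZMod 8) : ZMod m × ZMod 8 → ZMod m × ZMod 8 := fun v => (v.1, v.2 + δ)

lemma natCast_val_zmod (x : ZMod m) : ((x.val : ℕ) : ZMod m) = x := by
  rw [ZMod.natCast_val, ZMod.cast_id]

lemma rowS_iter (k : ℕ) (v : ZMod m × ZMod 8) :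
    (rowS m)^[k] v = (v.1 + (k : ZMod m), v.2) := by
  induction k with
  | zero => simp
  | succ k ih =>
    rw [Function.iterate_succ_apply', ih]
    simp [rowS]
    push_cast
    ring

lemma colS_iter (δ : ZMod 8) (k : ℕ) (v : ZMod m × ZMod 8) :
    (colS m δ)^[k] v = (v.1, v.2 + (k : ZMod 8) * δ) := by
  induction k with
  | zero => simp
  | succ k ih =>
    rw [Function.iterate_succ_apply', ih]
    simp [colS]
    push_cast
    ring

lemma row_neighborSet (h1 : (1 : ZMod m) ≠ 0) (v : ZMod m × ZMod 8) :
    (fgraph (rowS m)).neighborSet v = {(v.1 + 1, v.2), (v.1 - 1, v.2)} := by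
  ext w
  simp only [SimpleGraph.mem_neighborSet, fgraph_adj, rowS, Set.mem_insert_iff,
    Set.mem_singleton_iff]
  constructor
  · rintro ⟨hne, h | h⟩
    · left; rw [h]
    · right
      have h2 : v.2 = w.2 := by rw [h]
      have h1' : v.1 = w.1 + 1 := by rw [h]
      have : w.1 = v.1 - 1 := by rw [h1']; ring
      rw [Prod.ext_iff]; exact ⟨this, h2.symm⟩
  · rintro (h | h)
    · constructor
      · intro he; rw [he] at h
        have : w.1 = w.1 + 1 := congrArg Prod.fst h
        exact h1 (by linear_combination this.symm)
      · exact Or.inl (by rw [h])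
    · constructor
      · intro he; rw [he] at h
        have : w.1 = w.1 - 1 := congrArg Prod.fst h
        exact h1 (by linear_combination this)
      · refine Or.inr ?_
        rw [Prod.ext_iff]
        have h1' : w.1 = v.1 - 1 := by rw [h]
        have h2 : w.2 = v.2 := by rw [h]
        exact ⟨by rw [h1']; ring, h2.symm⟩

lemma row_nbhd_ncard (h1 : (1 : ZMod m) ≠ 0) (h2 : (2 : ZMod m) ≠ 0) (v : ZMod m × ZMod 8) :
    ((fgraph (rowS m)).neighborSet v).ncard = 2 := by
  rw [row_neighborSet h1 v]
  apply Set.ncard_pair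
  intro h
  have := congrArg Prod.fst h
  simp only at this
  exact h2 (by linear_combination this)

lemma row_supp (h1 : (1 : ZMod m) ≠ 0) (v : ZMod m × ZMod 8) :
    ((fgraph (rowS m)).connectedComponentMk v).supp = {w | w.2 = v.2} := by
  have hs : ∀ w, rowS m w ≠ w := by
    intro w hw
    have := congrArg Prod.fst hw
    simp only [rowS] at this
    exact h1 (by linear_combination this)
  ext w
  simp only [SimpleGraph.ConnectedComponent.mem_supp_iff, SimpleGraph.ConnectedComponent.eq,
    Set.mem_setOf_eq]
  constructor
  · intro hr
    obtain ⟨p⟩ := hr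
    induction p with
    | nil => rfl
    | @cons a b c hab p ih =>
      have hab2 : a.2 = b.2 := by
        rw [fgraph_adj] at hab
        rcases hab.2 with h | h
        · rw [h]; rfl
        · rw [h]; rfl
      rw [hab2]; exact ih
  · intro hw
    have hr : (fgraph (rowS m)).Reachable v w := by
      have := reach_iter (rowS m) hs v ((w.1 - v.1).val)
      rw [rowS_iter] at this
      rw [natCast_val_zmod] at this
      have heq : (v.1 + (w.1 - v.1), v.2) = w := by
        rw [Prod.ext_iff]
        exact ⟨by ring, hw.symm⟩
      rwa [heq] at this
    exact hr.symm

lemma row_supp_ncard (h1 : (1 : ZMod m) ≠ 0) (v : ZMod m × ZMod 8) :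
    ((fgraph (rowS m)).connectedComponentMk v).supp.ncard = m := by
  rw [row_supp h1 v]
  have : {w : ZMod m × ZMod 8 | w.2 = v.2} = (fun a : ZMod m => (a, v.2)) '' Set.univ := by
    ext w
    simp only [Set.mem_setOf_eq, Set.image_univ, Set.mem_range]
    constructor
    · intro h; exact ⟨w.1, by rw [Prod.ext_iff]; exact ⟨rfl, h.symm⟩⟩
    · rintro ⟨a, rfl⟩; rfl
  rw [this, Set.ncard_image_of_injective _ (fun a b hab => congrArg Prod.fst hab),
    Set.ncard_univ, Nat.card_zmod]

lemma col_neighborSet (δ : ZMod 8) (hδ : δ ≠ 0) (v : ZMod m × ZMod 8) :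
    (fgraph (colS m δ)).neighborSet v = {(v.1, v.2 + δ), (v.1, v.2 - δ)} := by
  ext w
  simp only [SimpleGraph.mem_neighborSet, fgraph_adj, colS, Set.mem_insert_iff,
    Set.mem_singleton_iff]
  constructor
  · rintro ⟨hne, h | h⟩
    · left; rw [h]
    · right
      have h2 : v.2 = w.2 + δ := by rw [h]
      have h1' : v.1 = w.1 := by rw [h]
      rw [Prod.ext_iff]
      exact ⟨h1'.symm, by rw [h2]; ring⟩
  · rintro (h | h)
    · constructor
      · intro he; rw [he] at h
        have : w.2 = w.2 + δ := congrArg Prod.snd h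
        exact hδ (by linear_combination this.symm)
      · exact Or.inl (by rw [h])
    · constructor
      · intro he; rw [he] at h
        have : w.2 = w.2 - δ := congrArg Prod.snd h
        exact hδ (by linear_combination this)
      · refine Or.inr ?_
        rw [Prod.ext_iff]
        have h1' : w.1 = v.1 := by rw [h]
        have h2 : w.2 = v.2 - δ := by rw [h]
        exact ⟨h1'.symm, by rw [h2]; ring⟩

lemma col_nbhd_ncard (δ : ZMod 8) (hδ : δ ≠ 0) (h2δ : δ + δ ≠ 0) (v : ZMod m × ZMod 8) :
    ((fgraph (colS m δ)).neighborSet v).ncard = 2 := by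
  rw [col_neighborSet δ hδ v]
  apply Set.ncard_pair
  intro h
  have := congrArg Prod.snd h
  simp only at this
  exact h2δ (by linear_combination this)

lemma col_supp (δ : ZMod 8) (hδ : δ ≠ 0)
    (hgen : ∀ i j : ZMod 8, ∃ k : Fin 8, j = i + ((k : ℕ) : ZMod 8) * δ)
    (v : ZMod m × ZMod 8) :
    ((fgraph (colS m δ)).connectedComponentMk v).supp = {w | w.1 = v.1} := by
  have hs : ∀ w, colS m δ w ≠ w := by
    intro w hw
    have := congrArg Prod.snd hw
    simp only [colS] at this
    exact hδ (by linear_combination this)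
  ext w
  simp only [SimpleGraph.ConnectedComponent.mem_supp_iff, SimpleGraph.ConnectedComponent.eq,
    Set.mem_setOf_eq]
  constructor
  · intro hr
    obtain ⟨p⟩ := hr
    induction p with
    | nil => rfl
    | @cons a b c hab p ih =>
      have hab2 : a.1 = b.1 := by
        rw [fgraph_adj] at hab
        rcases hab.2 with h | h
        · rw [h]; rfl
        · rw [h]; rfl
      rw [hab2]; exact ih
  · intro hw
    obtain ⟨k, hk⟩ := hgen v.2 w.2
    have hr : (fgraph (colS m δ)).Reachable v w := by
      have := reach_iter (colS m δ) hs v (k : ℕ)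
      rw [colS_iter] at this
      have heq : (v.1, v.2 + ((k : ℕ) : ZMod 8) * δ) = w := by
        rw [Prod.ext_iff]
        exact ⟨hw.symm, hk.symm⟩
      rwa [heq] at this
    exact hr.symm

lemma col_supp_ncard (δ : ZMod 8) (hδ : δ ≠ 0)
    (hgen : ∀ i j : ZMod 8, ∃ k : Fin 8, j = i + ((k : ℕ) : ZMod 8) * δ)
    (v : ZMod m × ZMod 8) :
    ((fgraph (colS m δ)).connectedComponentMk v).supp.ncard = 8 := by
  rw [col_supp δ hδ hgen v]
  have : {w : ZMod m × ZMod 8 | w.1 = v.1} = (fun j : ZMod 8 => (v.1, j)) '' Set.univ := by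
    ext w
    simp only [Set.mem_setOf_eq, Set.image_univ, Set.mem_range]
    constructor
    · intro h; exact ⟨w.2, by rw [Prod.ext_iff]; exact ⟨h.symm, rfl⟩⟩
    · rintro ⟨a, rfl⟩; rfl
  rw [this, Set.ncard_image_of_injective _ (fun a b hab => congrArg Prod.snd hab),
    Set.ncard_univ, Nat.card_zmod]

end base

def evb (i : ZMod 8) : Bool := i.val % 2 == 0
def xor4 (c d : Fin 4) : Fin 4 := ⟨Nat.xor c.val d.val % 4, Nat.mod_lt _ (by norm_num)⟩
def xorP (c : Fin 4) (i : ZMod 8) : ZMod 8 :=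
  ((2 * (Nat.xor (i.val / 2) c.val) + i.val % 2 : ℕ) : ZMod 8)
def mul4 : Fin 4 → Fin 4 → Fin 4 := ![![0,0,0,0],![0,1,2,3],![0,2,3,1],![0,3,1,2]]

lemma xorP_invol : ∀ (c : Fin 4) (i : ZMod 8), xorP c (xorP c i) = i := by decide
lemma xorP_xorP : ∀ (c c' : Fin 4) (i : ZMod 8), xorP c (xorP c' i) = xorP (xor4 c c') i := by decide
lemma mul4_linear : ∀ (d d' r : Fin 4), xor4 (mul4 d r) (mul4 d' r) = mul4 (xor4 d d') r := by decide
lemma xor4_eq_zero : ∀ (a b : Fin 4), xor4 a b = 0 ↔ a = b := by decide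
lemma evb_flip1 : ∀ i : ZMod 8, evb (i + 1) = !evb i := by decide
lemma evb_flip3 : ∀ i : ZMod 8, evb (i + 3) = !evb i := by decide

def C8cond (b : Bool) (δ x2 y2 : ZMod 8) : Prop :=
  (evb x2 = b ∧ y2 = x2 + δ) ∨ (evb y2 ≠ b ∧ x2 = y2 + δ)

instance (b : Bool) (δ x2 y2 : ZMod 8) : Decidable (C8cond b δ x2 y2) := by
  unfold C8cond; infer_instance

def fcond (x2 y2 : ZMod 8) (wd : Fin 4) : Fin 8 → Prop := fun i =>
  if i = 0 then C8cond true 1 x2 y2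
  else if i = 1 then C8cond true 3 x2 y2
  else if i = 2 then C8cond false 1 x2 y2
  else if i = 3 then C8cond false 3 x2 y2
  else if i = 4 then y2 = xorP (mul4 wd 0) x2
  else if i = 5 then y2 = xorP (mul4 wd 1) x2
  else if i = 6 then y2 = xorP (mul4 wd 2) x2
  else y2 = xorP (mul4 wd 3) x2

instance (x2 y2 : ZMod 8) (wd : Fin 4) (i : Fin 8) : Decidable (fcond x2 y2 wd i) := by
  unfold fcond; infer_instance

set_option maxHeartbeats 2000000 in
lemma key_classify : ∀ (x2 y2 : ZMod 8) (wd : Fin 4), wd ≠ 0 →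
    ∃! i : Fin 8, fcond x2 y2 wd i := by
  unfold ExistsUnique
  decide

section mpart
variable {m : ℕ} [NeZero m]

def lam (m : ℕ) (a : ZMod m) : Fin 4 :=
  if a.val = m - 1 then 2 else if a.val % 2 = 0 then 0 else 1

lemma lam_ne (hm : 3 ≤ m) (a : ZMod m) : lam m (a + 1) ≠ lam m a := by
  have hmlt : a.val < m := ZMod.val_lt a
  have hv1 : (1 : ZMod m).val = 1 := ZMod.val_one'' (by omega)
  have hval : (a + 1).val = (a.val + 1) % m := by rw [ZMod.val_add, hv1]
  by_cases hlast : a.val = m - 1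
  · have h0 : (a + 1).val = 0 := by
      rw [hval, hlast]
      have hm1 : m - 1 + 1 = m := by omega
      rw [hm1, Nat.mod_self]
    unfold lam
    rw [h0, hlast]
    have : ¬ (0 = m - 1) := by omega
    simp [this]
  · have hlt : a.val + 1 < m := by omega
    have h1 : (a + 1).val = a.val + 1 := by rw [hval, Nat.mod_eq_of_lt hlt]
    unfold lam
    rw [h1, if_neg hlast]
    by_cases h2 : a.val + 1 = m - 1
    · rw [if_pos h2]
      by_cases hp : a.val % 2 = 0 <;> simp [hp]
    · rw [if_neg h2]
      by_cases hp : a.val % 2 = 0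
      · rw [if_pos hp, if_neg (by omega)]
        decide
      · rw [if_neg hp, if_pos (by omega)]
        decide

def LL (m : ℕ) (r : Fin 4) (a : ZMod m) : Fin 4 := mul4 (lam m a) r

def sCm (m : ℕ) (r : Fin 4) : ZMod m × ZMod 8 → ZMod m × ZMod 8 :=
  fun v => (v.1 + 1, xorP (LL m r (v.1 + 1)) (xorP (LL m r v.1) v.2))

def eCm (m : ℕ) (r : Fin 4) : (ZMod m × ZMod 8) ≃ (ZMod m × ZMod 8) where
  toFun := fun v => (v.1, xorP (LL m r v.1) v.2)
  invFun := fun v => (v.1, xorP (LL m r v.1) v.2)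
  left_inv := fun v => by simp [xorP_invol]
  right_inv := fun v => by simp [xorP_invol]

lemma eCm_equivar (r : Fin 4) (v : ZMod m × ZMod 8) :
    eCm m r (sCm m r v) = rowS m (eCm m r v) := by
  simp only [eCm, sCm, rowS, Equiv.coe_fn_mk]
  exact Prod.ext rfl (xorP_invol _ _)

def g8 (m : ℕ) (b : Bool) (i : ZMod 8) : ZMod m := if evb i = b then 1 else 0

def sC8 (m : ℕ) (b : Bool) (δ : ZMod 8) : ZMod m × ZMod 8 → ZMod m × ZMod 8 :=
  fun v => (if evb v.2 = b then v.1 + 1 else v.1 - 1, v.2 + δ)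

def eC8 (m : ℕ) (b : Bool) : (ZMod m × ZMod 8) ≃ (ZMod m × ZMod 8) where
  toFun := fun v => (v.1 + g8 m b v.2, v.2)
  invFun := fun v => (v.1 - g8 m b v.2, v.2)
  left_inv := fun v => by simp
  right_inv := fun v => by simp

lemma eC8_equivar (b : Bool) (δ : ZMod 8) (hflip : ∀ i : ZMod 8, evb (i + δ) = !evb i)
    (v : ZMod m × ZMod 8) :
    eC8 m b (sC8 m b δ v) = colS m δ (eC8 m b v) := by
  simp only [eC8, sC8, colS, Equiv.coe_fn_mk]
  refine Prod.ext ?_ rfl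
  simp only [g8, hflip]
  by_cases hb : evb v.2 = b
  · have hb' : ¬ ((!evb v.2) = b) := by rw [hb]; simp
    rw [if_pos hb, if_pos hb, if_neg hb']
    ring
  · have hb' : (!evb v.2) = b := by
      cases hbv : evb v.2 <;> cases b <;> simp_all
    rw [if_neg hb, if_neg hb, if_pos hb']
    ring

end mpart

section mpart2
variable {m : ℕ} [NeZero m]

lemma adjC8_iff (h2 : (2 : ZMod m) ≠ 0) (h1 : (1 : ZMod m) ≠ 0) (b : Bool) (δ : ZMod 8)
    (x y : ZMod m × ZMod 8) (hxy : y.1 = x.1 + 1) :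
    (fgraph (sC8 m b δ)).Adj x y ↔ C8cond b δ x.2 y.2 := by
  have hne : x ≠ y := by
    intro he
    rw [he] at hxy
    exact h1 (by linear_combination -hxy)
  rw [fgraph_adj]
  unfold C8cond
  constructor
  · rintro ⟨-, h | h⟩
    · have hy2 : y.2 = x.2 + δ := by rw [h]; rfl
      have hy1 : y.1 = if evb x.2 = b then x.1 + 1 else x.1 - 1 := by rw [h]; rfl
      by_cases hb : evb x.2 = b
      · exact Or.inl ⟨hb, hy2⟩
      · exfalso
        rw [if_neg hb] at hy1
        rw [hxy] at hy1
        exact h2 (by linear_combination hy1)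
    · have hx2 : x.2 = y.2 + δ := by rw [h]; rfl
      have hx1 : x.1 = if evb y.2 = b then y.1 + 1 else y.1 - 1 := by rw [h]; rfl
      by_cases hb : evb y.2 = b
      · exfalso
        rw [if_pos hb] at hx1
        rw [hxy] at hx1
        exact h2 (by linear_combination -hx1)
      · exact Or.inr ⟨hb, hx2⟩
  · rintro (⟨hb, hy2⟩ | ⟨hb, hx2⟩)
    · refine ⟨hne, Or.inl ?_⟩
      have : sC8 m b δ x = (x.1 + 1, x.2 + δ) := by simp [sC8, if_pos hb]
      rw [this]
      exact Prod.ext hxy hy2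
    · refine ⟨hne, Or.inr ?_⟩
      have : sC8 m b δ y = (y.1 - 1, y.2 + δ) := by simp [sC8, if_neg hb]
      rw [this]
      refine Prod.ext ?_ hx2
      rw [hxy]; ring

lemma adjCm_iff (h2 : (2 : ZMod m) ≠ 0) (h1 : (1 : ZMod m) ≠ 0) (r : Fin 4)
    (x y : ZMod m × ZMod 8) (hxy : y.1 = x.1 + 1) :
    (fgraph (sCm m r)).Adj x y ↔
      y.2 = xorP (mul4 (xor4 (lam m (x.1 + 1)) (lam m x.1)) r) x.2 := by
  have hne : x ≠ y := by
    intro he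
    rw [he] at hxy
    exact h1 (by linear_combination -hxy)
  have hrw : xorP (LL m r (x.1 + 1)) (xorP (LL m r x.1) x.2)
      = xorP (mul4 (xor4 (lam m (x.1 + 1)) (lam m x.1)) r) x.2 := by
    rw [xorP_xorP]
    unfold LL
    rw [mul4_linear]
  rw [fgraph_adj]
  constructor
  · rintro ⟨-, h | h⟩
    · have : y.2 = xorP (LL m r (x.1 + 1)) (xorP (LL m r x.1) x.2) := by rw [h]; rfl
      rw [this]; exact hrw
    · exfalso
      have : x.1 = y.1 + 1 := by rw [h]; rfl
      rw [hxy] at this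
      exact h2 (by linear_combination -this)
  · intro hy2
    refine ⟨hne, Or.inl ?_⟩
    refine Prod.ext hxy ?_
    exact hy2.trans hrw.symm

def facs (m : ℕ) : Fin 8 → SimpleGraph (ZMod m × ZMod 8) := fun i =>
  if i = 0 then fgraph (sC8 m true 1)
  else if i = 1 then fgraph (sC8 m true 3)
  else if i = 2 then fgraph (sC8 m false 1)
  else if i = 3 then fgraph (sC8 m false 3)
  else if i = 4 then fgraph (sCm m 0)
  else if i = 5 then fgraph (sCm m 1)
  else if i = 6 then fgraph (sCm m 2)
  else fgraph (sCm m 3)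

lemma adj_iff_fcond (h2 : (2 : ZMod m) ≠ 0) (h1 : (1 : ZMod m) ≠ 0)
    (x y : ZMod m × ZMod 8) (hxy : y.1 = x.1 + 1) (i : Fin 8) :
    (facs m i).Adj x y ↔ fcond x.2 y.2 (xor4 (lam m (x.1 + 1)) (lam m x.1)) i := by
  fin_cases i <;>
    simp only [facs, fcond, if_true, if_false, show ((0:Fin 8) = 0) = True by simp,
      reduceIte] <;>
    first
      | exact adjC8_iff h2 h1 _ _ x y hxy
      | exact adjCm_iff h2 h1 _ x y hxy

lemma classify (hm : 3 ≤ m) (h2 : (2 : ZMod m) ≠ 0) (h1 : (1 : ZMod m) ≠ 0)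
    (x y : ZMod m × ZMod 8) (hxy : y.1 = x.1 + 1) :
    ∃! i : Fin 8, (facs m i).Adj x y := by
  have hwd : xor4 (lam m (x.1 + 1)) (lam m x.1) ≠ 0 := by
    rw [Ne, xor4_eq_zero]
    exact lam_ne hm x.1
  obtain ⟨i, hi, hu⟩ := key_classify x.2 y.2 _ hwd
  refine ⟨i, (adj_iff_fcond h2 h1 x y hxy i).2 hi, ?_⟩
  intro j hj
  exact hu j ((adj_iff_fcond h2 h1 x y hxy j).1 hj)

end mpart2

section final
variable {m : ℕ} [NeZero m]

lemma hgen1 : ∀ i j : ZMod 8, ∃ k : Fin 8, j = i + ((k : ℕ) : ZMod 8) * 1 := by decide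
lemma hgen3 : ∀ i j : ZMod 8, ∃ k : Fin 8, j = i + ((k : ℕ) : ZMod 8) * 3 := by decide

lemma cf8 (h2 : (2 : ZMod m) ≠ 0) (h1 : (1 : ZMod m) ≠ 0) (b : Bool) (δ : ZMod 8)
    (hflip : ∀ i : ZMod 8, evb (i + δ) = !evb i) (hδ : δ ≠ 0) (h2δ : δ + δ ≠ 0)
    (hgen : ∀ i j : ZMod 8, ∃ k : Fin 8, j = i + ((k : ℕ) : ZMod 8) * δ) :
    IsCycleFactor (fgraph (sC8 m b δ)) 8 :=
  conj_isCycleFactor (eC8 m b) (sC8 m b δ) (colS m δ) (eC8_equivar b δ hflip) 8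
    (col_nbhd_ncard δ hδ h2δ) (col_supp_ncard δ hδ hgen)

lemma cfm (h2 : (2 : ZMod m) ≠ 0) (h1 : (1 : ZMod m) ≠ 0) (r : Fin 4) :
    IsCycleFactor (fgraph (sCm m r)) m :=
  conj_isCycleFactor (eCm m r) (sCm m r) (rowS m) (eCm_equivar r) m
    (row_nbhd_ncard h1 h2) (row_supp_ncard h1)

lemma sC8_le (b : Bool) (δ : ZMod 8) :
    fgraph (sC8 m b δ) ≤ SimpleGraph.fromRel (fun x y : ZMod m × ZMod 8 => x.1 - y.1 = 1) := by
  intro x y h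
  rw [fgraph_adj] at h
  obtain ⟨hne, h | h⟩ := h
  · rw [SimpleGraph.fromRel_adj]
    refine ⟨hne, ?_⟩
    have hy1 : y.1 = if evb x.2 = b then x.1 + 1 else x.1 - 1 := by rw [h]; rfl
    by_cases hb : evb x.2 = b
    · rw [if_pos hb] at hy1
      exact Or.inr (by linear_combination hy1)
    · rw [if_neg hb] at hy1
      exact Or.inl (by linear_combination -hy1)
  · rw [SimpleGraph.fromRel_adj]
    refine ⟨hne, ?_⟩
    have hx1 : x.1 = if evb y.2 = b then y.1 + 1 else y.1 - 1 := by rw [h]; rfl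
    by_cases hb : evb y.2 = b
    · rw [if_pos hb] at hx1
      exact Or.inl (by linear_combination hx1)
    · rw [if_neg hb] at hx1
      exact Or.inr (by linear_combination -hx1)

lemma sCm_le (r : Fin 4) :
    fgraph (sCm m r) ≤ SimpleGraph.fromRel (fun x y : ZMod m × ZMod 8 => x.1 - y.1 = 1) := by
  intro x y h
  rw [fgraph_adj] at h
  obtain ⟨hne, h | h⟩ := h
  · rw [SimpleGraph.fromRel_adj]
    refine ⟨hne, ?_⟩
    have hy1 : y.1 = x.1 + 1 := by rw [h]; rfl
    exact Or.inr (by linear_combination hy1)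
  · rw [SimpleGraph.fromRel_adj]
    refine ⟨hne, ?_⟩
    have hx1 : x.1 = y.1 + 1 := by rw [h]; rfl
    exact Or.inl (by linear_combination hx1)

end final


theorem stmt_12 (m : ℕ) (hm : 3 ≤ m) (hmo : Odd m) :
    CycleDecomp
      (SimpleGraph.fromRel (fun x y : ZMod m × ZMod 8 => x.1 - y.1 = 1))
      (fun i : Fin 8 => if (i : ℕ) < 4 then 8 else m) := by
  haveI : NeZero m := ⟨by omega⟩
  have h2 : (2 : ZMod m) ≠ 0 := by
    intro h
    have h' : ((2 : ℕ) : ZMod m) = 0 := by exact_mod_cast h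
    have hdvd : m ∣ 2 := (ZMod.natCast_eq_zero_iff 2 m).1 h'
    have := Nat.le_of_dvd (by norm_num) hdvd
    omega
  have h1 : (1 : ZMod m) ≠ 0 := by
    intro h
    exact h2 (by linear_combination 2 * h)
  refine ⟨facs m, ?_, ?_⟩
  · intro i
    fin_cases i
    · exact ⟨sC8_le true 1, by
        simpa [facs] using cf8 h2 h1 true 1 evb_flip1 (by decide) (by decide) hgen1⟩
    · exact ⟨sC8_le true 3, by
        simpa [facs] using cf8 h2 h1 true 3 evb_flip3 (by decide) (by decide) hgen3⟩
    · exact ⟨sC8_le false 1, by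
        simpa [facs] using cf8 h2 h1 false 1 evb_flip1 (by decide) (by decide) hgen1⟩
    · exact ⟨sC8_le false 3, by
        simpa [facs] using cf8 h2 h1 false 3 evb_flip3 (by decide) (by decide) hgen3⟩
    · exact ⟨sCm_le 0, by simpa [facs] using cfm h2 h1 0⟩
    · exact ⟨sCm_le 1, by simpa [facs] using cfm h2 h1 1⟩
    · exact ⟨sCm_le 2, by simpa [facs] using cfm h2 h1 2⟩
    · exact ⟨sCm_le 3, by simpa [facs] using cfm h2 h1 3⟩
  · intro e he
    induction e with
    | _ x y =>
      rw [SimpleGraph.mem_edgeSet, SimpleGraph.fromRel_adj] at he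
      obtain ⟨hne, hor⟩ := he
      rcases hor with hcase | hcase
      · have hyx : x.1 = y.1 + 1 := by linear_combination hcase
        obtain ⟨i, hi, hu⟩ := classify hm h2 h1 y x hyx
        refine ⟨i, ?_, ?_⟩
        · show s(x, y) ∈ (facs m i).edgeSet
          rw [SimpleGraph.mem_edgeSet]
          exact hi.symm
        · intro j hj
          have hj' : s(x, y) ∈ (facs m j).edgeSet := hj
          rw [SimpleGraph.mem_edgeSet] at hj'
          exact hu j hj'.symm
      · have hxy : y.1 = x.1 + 1 := by linear_combination hcase
        obtain ⟨i, hi, hu⟩ := classify hm h2 h1 x y hxy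
        refine ⟨i, ?_, ?_⟩
        · show s(x, y) ∈ (facs m i).edgeSet
          rw [SimpleGraph.mem_edgeSet]
          exact hi
        · intro j hj
          have hj' : s(x, y) ∈ (facs m j).edgeSet := hj
          rw [SimpleGraph.mem_edgeSet] at hj'
          exact hu j hj'
end
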